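/- arXiv:2302.05364 — 2 statements merged into one kernel-verified Lean document; each statement's English description precedes it below -/
import Mathlib

section
/- Let K be a field, I an ideal of the multivariate polynomial ring K[x_1,…,x_n], and G a finite subset of I such that for every nonzero f ∈ I, the leading monomial of f (with respect to a fixed monomial order) is divisible by the leading monomial of some g ∈ G. Then G generates I. -/
open MvPolynomial

/-- The leading exponent (exponent vector of the leading monomial) of a
multivariate polynomial with respect to a monomial order. -/
noncomputable def leadExp {n : ℕ} (m : MonomialOrder (Fin n)) {K : Type*} [Field K]
    (f : MvPolynomial (Fin n) K) : Fin n →₀ ℕ :=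
  m.toSyn.symm (f.support.sup fun c => m.toSyn c)

theorem leadExp_eq_degree {n : ℕ} (m : MonomialOrder (Fin n)) {K : Type*} [Field K]
    (f : MvPolynomial (Fin n) K) : leadExp m f = m.degree f :=
  rfl

namespace MonomialOrder

variable {σ R : Type*} [CommRing R] (m : MonomialOrder σ)

/-- The remainder of `f ∈ I` on division by `B` lies in `I`, and no leading monomial of `B`
divides any of its monomials, so it must vanish. -/
theorem span_eq_of_forall_degree_le {B : Set (MvPolynomial σ R)} {I : Ideal (MvPolynomial σ R)}
    (hB : ∀ b ∈ B, IsUnit (m.leadingCoeff b)) (hBI : B ⊆ I)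
    (hdeg : ∀ f ∈ I, f ≠ 0 → ∃ b ∈ B, m.degree b ≤ m.degree f) :
    Ideal.span B = I := by
  refine le_antisymm (Ideal.span_le.mpr hBI) fun f hf => ?_
  obtain ⟨g, r, hfr, -, hr⟩ := m.div_set hB f
  set q := Finsupp.linearCombination _ (fun b : B ↦ (b : MvPolynomial σ R)) g
  have hq : q ∈ Ideal.span B :=
    (Finsupp.mem_span_iff_linearCombination _ _ _).mpr ⟨g, rfl⟩
  have hrI : r ∈ I := by
    rw [eq_sub_of_add_eq' hfr.symm]
    exact I.sub_mem hf (Ideal.span_le.mpr hBI hq)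
  have hr0 : r = 0 := by
    by_contra hr0
    obtain ⟨b, hb, hle⟩ := hdeg r hrI hr0
    exact hr _ (m.degree_mem_support hr0) b hb hle
  rw [hfr, hr0, add_zero]
  exact hq

end MonomialOrder

/-- A Gröbner basis of an ideal generates the ideal. -/
theorem stmt_3 {n : ℕ} (m : MonomialOrder (Fin n)) {K : Type*} [Field K]
    (I : Ideal (MvPolynomial (Fin n) K)) (G : Finset (MvPolynomial (Fin n) K))
    (hGI : (G : Set (MvPolynomial (Fin n) K)) ⊆ I)
    (hGB : ∀ f ∈ I, f ≠ 0 → ∃ g ∈ G, g ≠ 0 ∧ leadExp m g ≤ leadExp m f) :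
    Ideal.span (G : Set (MvPolynomial (Fin n) K)) = I := by
  rw [← Ideal.span_sdiff_singleton_zero]
  refine m.span_eq_of_forall_degree_le (fun g hg => ?_) (Set.sdiff_subset.trans hGI)
    fun f hf hf0 => ?_
  · exact isUnit_iff_ne_zero.mpr (m.leadingCoeff_ne_zero_iff.mpr hg.2)
  · obtain ⟨g, hgG, hg0, hle⟩ := hGB f hf hf0
    rw [leadExp_eq_degree, leadExp_eq_degree] at hle
    exact ⟨g, ⟨hgG, hg0⟩, hle⟩
end

section
/- Let K be a field, I an ideal of K[x_1,…,x_n], and G a Gröbner basis of I with respect to a fixed monomial order. Then for any polynomial f, f ∈ I if and only if the remainder of f upon multivariate division by G is zero. -/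
open MvPolynomial

/-- `r` is a remainder of `f` upon multivariate division by `G`:
`f - r` lies in the ideal generated by `G` and no monomial in the support of `r`
is divisible by the leading monomial of any element of `G`. -/
def IsRemainder {n : ℕ} (m : MonomialOrder (Fin n)) {K : Type*} [Field K]
    (G : Finset (MvPolynomial (Fin n) K)) (f r : MvPolynomial (Fin n) K) : Prop :=
  f - r ∈ Ideal.span (G : Set (MvPolynomial (Fin n) K)) ∧
    ∀ c ∈ r.support, ∀ g ∈ G, ¬ leadExp m g ≤ c

/-! Remainders exist by Mathlib's division algorithm `MonomialOrder.div_set`. Since `f - r ∈ I`,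
`f ∈ I` iff `r ∈ I`; and a nonzero `r ∈ I` would have its leading monomial divisible by the
leading monomial of some `g ∈ G`, which a remainder forbids. -/

section

variable {n : ℕ} {m : MonomialOrder (Fin n)} {K : Type*} [Field K]
  {G : Finset (MvPolynomial (Fin n) K)}

theorem exists_isRemainder (hG0 : (0 : MvPolynomial (Fin n) K) ∉ G)
    (f : MvPolynomial (Fin n) K) : ∃ r, IsRemainder m G f r := by
  have hunit : ∀ g ∈ (G : Set (MvPolynomial (Fin n) K)), IsUnit (m.leadingCoeff g) :=
    fun g hg => m.isUnit_leadingCoeff.mpr fun h => hG0 (h ▸ hg)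
  obtain ⟨q, r, hfr, -, hr⟩ := m.div_set hunit f
  refine ⟨r, ?_, hr⟩
  have hcomb : f - r ∈ LinearMap.range (Finsupp.linearCombination _ Subtype.val) :=
    ⟨q, by rw [hfr, add_sub_cancel_right]⟩
  rwa [Finsupp.range_linearCombination, Subtype.range_coe] at hcomb

theorem IsRemainder.mem_iff {I : Ideal (MvPolynomial (Fin n) K)}
    (hGI : (G : Set (MvPolynomial (Fin n) K)) ⊆ I) {f r : MvPolynomial (Fin n) K}
    (hr : IsRemainder m G f r) : f ∈ I ↔ r ∈ I := by
  have hfr : f - r ∈ I := Ideal.span_le.mpr hGI hr.1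
  exact ⟨fun hf => by simpa using I.sub_mem hf hfr, fun hrI => by simpa using I.add_mem hfr hrI⟩

theorem eq_zero_of_mem_of_forall_not_leadExp_le {I : Ideal (MvPolynomial (Fin n) K)}
    (hGB : ∀ f ∈ I, f ≠ 0 → ∃ g ∈ G, leadExp m g ≤ leadExp m f)
    {r : MvPolynomial (Fin n) K} (hrI : r ∈ I)
    (hr : ∀ c ∈ r.support, ∀ g ∈ G, ¬ leadExp m g ≤ c) : r = 0 := by
  by_contra hr0
  obtain ⟨g, hg, hle⟩ := hGB r hrI hr0
  -- `leadExp` is definitionally `MonomialOrder.degree`.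
  exact hr _ (m.degree_mem_support hr0) g hg hle

end

/-- Ideal membership via Gröbner bases: the division process produces a remainder,
and `f ∈ I` iff any remainder of `f` on division by the Gröbner basis `G` is zero. -/
theorem stmt_4 {n : ℕ} (m : MonomialOrder (Fin n)) {K : Type*} [Field K]
    (I : Ideal (MvPolynomial (Fin n) K)) (G : Finset (MvPolynomial (Fin n) K))
    (hGI : (G : Set (MvPolynomial (Fin n) K)) ⊆ I)
    (hG0 : (0 : MvPolynomial (Fin n) K) ∉ G)
    (hGB : ∀ f ∈ I, f ≠ 0 → ∃ g ∈ G, leadExp m g ≤ leadExp m f) :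
    ∀ f : MvPolynomial (Fin n) K,
      (∃ r, IsRemainder m G f r) ∧
      ∀ r, IsRemainder m G f r → (f ∈ I ↔ r = 0) := by
  intro f
  refine ⟨exists_isRemainder hG0 f, fun r hr => (hr.mem_iff hGI).trans ⟨?_, ?_⟩⟩
  · exact fun hrI => eq_zero_of_mem_of_forall_not_leadExp_le hGB hrI hr.2
  · rintro rfl
    exact I.zero_mem
end
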